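/- Consider T rounds with values v_t ∈ [0,1] and highest competing bids d_t ≥ 0, a budget B with 0 < B ≤ T, and let Û(λ) be the utility of the greedy budget-constrained bidder using shading multiplier λ (bidding min(λ·v_t, remaining budget), winning when the bid strictly exceeds d_t, utility = value won minus payment). Then for any λ ∈ [0,1] and ε ∈ [0, 1−λ], Û(λ+ε) ≥ Û(λ) − T²·ε/B − 2. -/

import Mathlib

/-!
Run the two bidders side by side. If the bidder with multiplier `λ + ε` is never capped by
its budget, it wins every round the `λ`-bidder wins and pays at most `ε` more there, so it
falls behind by at most `ε T ≤ T² ε / B`, plus `1` for the one round in which the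
`λ`-bidder's bid is capped. Otherwise the `(λ + ε)`-bidder ends with less than `λ + ε` of its
budget; as every unit paid at multiplier `μ` buys at least `(1 - μ) / μ` units of utility, its
utility is at least `(1 - μ) (B - μ) / μ`. The `λ`-bidder's utility is at most
`min ((1 - λ) T, (1 - λ) B / λ) + 1`, and `B < (λ + ε) T` makes the difference at most
`T² ε / B + 2`.
-/

open scoped Classical

/-- One round of the greedy budget-constrained bidder with shading multiplier `lam`:
state is (remaining budget, accumulated utility); the bid is `min (lam * v t)`
(remaining budget); the player wins iff her bid strictly exceeds `d t`, paying her
bid and gaining value `v t`. -/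
noncomputable def auctionStep (v d : ℕ → ℝ) (lam : ℝ) (s : ℝ × ℝ) (t : ℕ) : ℝ × ℝ :=
  if d t < min (lam * v t) s.1 then
    (s.1 - min (lam * v t) s.1, s.2 + (v t - min (lam * v t) s.1))
  else s

/-- State (remaining budget, utility) after the first `t` rounds, starting with budget `B`. -/
noncomputable def auctionState (v d : ℕ → ℝ) (B lam : ℝ) (t : ℕ) : ℝ × ℝ :=
  (List.range t).foldl (auctionStep v d lam) (B, 0)

/-- `Û(lam)`: total utility of the greedy budget-constrained bidder over `T` rounds. -/
noncomputable def Uhat (T : ℕ) (v d : ℕ → ℝ) (B lam : ℝ) : ℝ :=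
  (auctionState v d B lam T).2

section Run

variable {v d : ℕ → ℝ} {B μ : ℝ}

theorem auctionState_zero : auctionState v d B μ 0 = (B, 0) := rfl

theorem auctionState_succ (t : ℕ) :
    auctionState v d B μ (t + 1) = auctionStep v d μ (auctionState v d B μ t) t := by
  rw [auctionState, List.range_succ, List.foldl_append, List.foldl_cons, List.foldl_nil]
  rfl

theorem auctionStep_cases (s : ℝ × ℝ) (t : ℕ) :
    auctionStep v d μ s t = s ∨
    (d t < μ * v t ∧ μ * v t ≤ s.1 ∧
      auctionStep v d μ s t = (s.1 - μ * v t, s.2 + (v t - μ * v t))) ∨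
    (d t < s.1 ∧ s.1 < μ * v t ∧ auctionStep v d μ s t = (0, s.2 + (v t - s.1))) := by
  unfold auctionStep
  split_ifs with hwin
  · rcases le_or_gt (μ * v t) s.1 with hle | hlt
    · rw [min_eq_left hle] at hwin ⊢
      exact Or.inr (Or.inl ⟨hwin, hle, rfl⟩)
    · rw [min_eq_right hlt.le] at hwin ⊢
      exact Or.inr (Or.inr ⟨hwin, hlt, by simp⟩)
  · exact Or.inl rfl

theorem auctionState_snd_succ_of_bid_le {t : ℕ} (hbid : μ * v t ≤ (auctionState v d B μ t).1)
    (hwin : d t < μ * v t) :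
    (auctionState v d B μ (t + 1)).2 = (auctionState v d B μ t).2 + (v t - μ * v t) := by
  rw [auctionState_succ, auctionStep, min_eq_left hbid, if_pos hwin]

theorem auctionState_fst_antitone (hd : ∀ t, 0 ≤ d t) :
    Antitone fun t => (auctionState v d B μ t).1 := by
  refine antitone_nat_of_succ_le fun t => ?_
  rw [auctionState_succ]
  rcases auctionStep_cases (auctionState v d B μ t) t with h | ⟨hwin, -, h⟩ | ⟨hwin, -, h⟩ <;>
    rw [h]
  · linarith [hd t]
  · linarith [hd t]

theorem auctionState_fst_nonneg (hB : 0 ≤ B) (t : ℕ) : 0 ≤ (auctionState v d B μ t).1 := by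
  induction t with
  | zero => exact hB
  | succ t ih =>
    rw [auctionState_succ]
    rcases auctionStep_cases (auctionState v d B μ t) t with h | ⟨-, hle, h⟩ | ⟨-, -, h⟩ <;>
      rw [h]
    · exact ih
    · exact sub_nonneg.2 hle

theorem auctionState_snd_le_succ (hv : ∀ t, v t ∈ Set.Icc (0 : ℝ) 1) (hμ : μ ≤ 1) (t : ℕ) :
    (auctionState v d B μ t).2 ≤ (auctionState v d B μ (t + 1)).2 := by
  rw [auctionState_succ]
  have := (hv t).1
  rcases auctionStep_cases (auctionState v d B μ t) t with h | ⟨-, -, h⟩ | ⟨-, hcap, h⟩ <;>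
    rw [h]
  · nlinarith
  · nlinarith

/-- A bid is capped by the remaining budget at most once, since the budget is then exhausted
and a zero bid never wins. -/
theorem potential_auctionState_le (hd : ∀ t, 0 ≤ d t) (Φ : ℕ → ℝ × ℝ → ℝ) {c : ℝ}
    (hc : 0 ≤ c) (T : ℕ) (h0 : Φ 0 (B, 0) ≤ 0)
    (hlose : ∀ t < T, ∀ s, Φ (t + 1) s ≤ Φ t s)
    (hwin : ∀ t < T, ∀ s : ℝ × ℝ, d t < μ * v t → μ * v t ≤ s.1 →
      Φ (t + 1) (s.1 - μ * v t, s.2 + (v t - μ * v t)) ≤ Φ t s)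
    (hcap : ∀ t < T, ∀ s : ℝ × ℝ, d t < s.1 → s.1 < μ * v t →
      Φ (t + 1) (0, s.2 + (v t - s.1)) ≤ Φ t s + c) :
    Φ T (auctionState v d B μ T) ≤ c := by
  suffices h : ∀ t ≤ T, Φ t (auctionState v d B μ t) ≤ 0 ∨
      ((auctionState v d B μ t).1 = 0 ∧ Φ t (auctionState v d B μ t) ≤ c) by
    rcases h T le_rfl with h | h
    · linarith
    · exact h.2
  intro t
  induction t with
  | zero => exact fun _ => Or.inl h0
  | succ t ih =>
    intro ht
    have ht : t < T := ht
    rw [auctionState_succ]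
    set s := auctionState v d B μ t
    rcases auctionStep_cases s t with h | ⟨hbid, hle, h⟩ | ⟨hbid, hlt, h⟩ <;> rw [h] <;>
      rcases ih ht.le with hΦ | ⟨hs, hΦ⟩
    · exact Or.inl ((hlose t ht s).trans hΦ)
    · exact Or.inr ⟨hs, (hlose t ht s).trans hΦ⟩
    · exact Or.inl ((hwin t ht s hbid hle).trans hΦ)
    · linarith [hd t]
    · exact Or.inr ⟨rfl, by linarith [hcap t ht s hbid hlt]⟩
    · linarith [hd t]

theorem auctionState_snd_le_mul_time (hv : ∀ t, v t ∈ Set.Icc (0 : ℝ) 1)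
    (hd : ∀ t, 0 ≤ d t) (hμ : μ ≤ 1) (t : ℕ) :
    (auctionState v d B μ t).2 ≤ (1 - μ) * t + 1 := by
  have h := potential_auctionState_le (μ := μ) (v := v) (B := B) hd
    (fun t s => s.2 - (1 - μ) * t) zero_le_one t (by simp)
    (fun t _ s => by push_cast; linarith)
    (fun t _ s _ _ => by push_cast; nlinarith [(hv t).2])
    (fun t _ s hbid _ => by push_cast; linarith [(hv t).2, hd t])
  linarith

theorem mul_auctionState_snd_le (hv : ∀ t, v t ∈ Set.Icc (0 : ℝ) 1) (hd : ∀ t, 0 ≤ d t)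
    (hB : 0 ≤ B) (hμ : μ ∈ Set.Icc (0 : ℝ) 1) (t : ℕ) :
    μ * (auctionState v d B μ t).2 ≤ (1 - μ) * B + μ := by
  have h := potential_auctionState_le (μ := μ) (v := v) (B := B) hd
    (fun _ s => μ * s.2 - (1 - μ) * (B - s.1)) hμ.1 t (by simp)
    (fun t _ s => le_rfl)
    (fun t _ s _ _ => by linarith)
    (fun t _ s hbid _ => by nlinarith [(hv t).2, hd t, hμ.1, hμ.2])
  nlinarith [auctionState_fst_nonneg (v := v) (d := d) (μ := μ) hB t, hμ.2]

theorem sub_auctionState_fst_le (hv : ∀ t, v t ∈ Set.Icc (0 : ℝ) 1) (hd : ∀ t, 0 ≤ d t)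
    (hμ : 0 ≤ μ) (t : ℕ) :
    B - (auctionState v d B μ t).1 ≤ μ * t := by
  have h := potential_auctionState_le (μ := μ) (v := v) (B := B) hd
    (fun t s => B - s.1 - μ * t) le_rfl t (by simp)
    (fun t _ s => by push_cast; linarith)
    (fun t _ s _ _ => by push_cast; nlinarith [(hv t).2])
    (fun t _ s _ hcap => by push_cast; nlinarith [(hv t).2])
  linarith

theorem mul_sub_auctionState_fst_le (hd : ∀ t, 0 ≤ d t) (t : ℕ) :
    (1 - μ) * (B - (auctionState v d B μ t).1) ≤ μ * (auctionState v d B μ t).2 := by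
  have h := potential_auctionState_le (μ := μ) (v := v) (B := B) hd
    (fun _ s => (1 - μ) * (B - s.1) - μ * s.2) le_rfl t (by simp)
    (fun t _ s => le_rfl)
    (fun t _ s _ _ => by linarith)
    (fun t _ s _ hcap => by linarith)
  linarith

theorem lt_mul_of_bid_capped (hv : ∀ t, v t ∈ Set.Icc (0 : ℝ) 1) (hd : ∀ t, 0 ≤ d t)
    (hμ : 0 ≤ μ) {T s : ℕ} (hsT : s < T) (hcap : (auctionState v d B μ s).1 < μ * v s) :
    B < μ * T := by
  have hspent := sub_auctionState_fst_le (B := B) hv hd hμ s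
  have hs : (s : ℝ) + 1 ≤ T := by exact_mod_cast hsT
  nlinarith [(hv s).2]

theorem mul_auctionState_snd_ge_of_bid_capped (hv : ∀ t, v t ∈ Set.Icc (0 : ℝ) 1)
    (hd : ∀ t, 0 ≤ d t) (hμ : μ ∈ Set.Icc (0 : ℝ) 1) {T s : ℕ} (hsT : s < T)
    (hcap : (auctionState v d B μ s).1 < μ * v s) :
    (1 - μ) * (B - μ) ≤ μ * (auctionState v d B μ T).2 := by
  have hbudget : (auctionState v d B μ T).1 ≤ (auctionState v d B μ s).1 :=
    auctionState_fst_antitone hd hsT.le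
  have hbid : μ * v s ≤ μ := mul_le_of_le_one_right hμ.1 (hv s).2
  nlinarith [hμ.2, mul_sub_auctionState_fst_le (v := v) (B := B) (μ := μ) hd T]

/-- While `b` is never capped by its budget, it wins every round that `a` wins and gains at
most `b - a` less there; the one round in which `a`'s bid is capped costs at most `1`. -/
theorem auctionState_snd_sub_le_of_bid_uncapped (hv : ∀ t, v t ∈ Set.Icc (0 : ℝ) 1)
    (hd : ∀ t, 0 ≤ d t) {a b : ℝ} (hab : a ≤ b) (hb : b ≤ 1) (T : ℕ)
    (huncapped : ∀ s < T, b * v s ≤ (auctionState v d B b s).1) :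
    (auctionState v d B a T).2 - (b - a) * T - 1 ≤ (auctionState v d B b T).2 := by
  have hbwin : ∀ t < T, d t < a * v t →
      (auctionState v d B b (t + 1)).2 = (auctionState v d B b t).2 + (v t - b * v t) :=
    fun t ht hwin => auctionState_snd_succ_of_bid_le (huncapped t ht)
      (hwin.trans_le (mul_le_mul_of_nonneg_right hab (hv t).1))
  have h := potential_auctionState_le (μ := a) (v := v) (B := B) hd
    (fun t s => s.2 - (b - a) * t - (auctionState v d B b t).2) zero_le_one T
    (by simp [auctionState_zero])
    (fun t _ s => by
      push_cast
      linarith [auctionState_snd_le_succ (d := d) (B := B) hv hb t])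
    (fun t ht s hwin _ => by
      push_cast
      rw [hbwin t ht hwin]
      nlinarith [(hv t).2])
    (fun t ht s hwin hcap => by
      push_cast
      rw [hbwin t ht (hwin.trans hcap)]
      nlinarith [(hv t).1, (hv t).2, hd t])
  linarith

end Run

theorem utility_gap_le_of_bid_capped {T B a b U W : ℝ} (hB : 0 < B) (hBT : B ≤ T)
    (ha : 0 ≤ a) (hab : a ≤ b) (hbT : B < b * T)
    (hUtime : U ≤ (1 - a) * T + 1) (hUbudget : a * U ≤ (1 - a) * B + a)
    (hW : (1 - b) * (B - b) ≤ b * W) :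
    U - T ^ 2 * (b - a) / B - 2 ≤ W := by
  have hT : 0 < T := hB.trans_le hBT
  have hb0 : 0 < b := by
    by_contra! h
    nlinarith
  have hW' : (1 - b) * B / b - 1 ≤ W := by
    have : (1 - b) * (B - b) / b ≤ W := by rwa [div_le_iff₀ hb0, mul_comm W]
    have : (1 - b) * (B - b) / b = (1 - b) * B / b - (1 - b) := by field_simp
    linarith
  -- The budget bound on `U` is the sharper one when `a * b ≥ (B / T) ^ 2`, the time bound otherwise.
  rcases le_or_gt (B ^ 2) (a * b * T ^ 2) with hab2 | hab2
  · have ha0 : 0 < a := by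
      by_contra! h
      have : a * b * T ^ 2 ≤ 0 := by rw [le_antisymm h ha]; simp
      linarith [pow_pos hB 2]
    have hU' : U ≤ (1 - a) * B / a + 1 := by
      rw [div_add_one ha0.ne', le_div_iff₀ ha0]
      linarith
    have hgap : (1 - a) * B / a - (1 - b) * B / b = B * (b - a) / (a * b) := by
      field_simp
      ring
    have hgap_le : B * (b - a) / (a * b) ≤ T ^ 2 * (b - a) / B := by
      rw [div_le_div_iff₀ (by positivity) hB]
      nlinarith [mul_le_mul_of_nonneg_left hab2 (sub_nonneg.2 hab)]
    linarith
  · have hg : 0 ≤ T ^ 2 * b * (b - a) - (1 - a) * T * b * B + (1 - b) * B ^ 2 := by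
      have hid : T * (T ^ 2 * b * (b - a) - (1 - a) * T * b * B + (1 - b) * B ^ 2)
          = (T * b - B) * (T ^ 2 * b - B ^ 2) + (T - B) * (B ^ 2 - a * b * T ^ 2) := by ring
      have hTb : B ^ 2 ≤ T ^ 2 * b := by nlinarith
      have : 0 ≤ T * (T ^ 2 * b * (b - a) - (1 - a) * T * b * B + (1 - b) * B ^ 2) := by
        rw [hid]
        apply add_nonneg <;> apply mul_nonneg <;> linarith
      exact nonneg_of_mul_nonneg_right (by linarith) hT
    have hgap : T ^ 2 * (b - a) / B - ((1 - a) * T - (1 - b) * B / b)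
        = (T ^ 2 * b * (b - a) - (1 - a) * T * b * B + (1 - b) * B ^ 2) / (b * B) := by
      field_simp
      ring
    have : 0 ≤ T ^ 2 * (b - a) / B - ((1 - a) * T - (1 - b) * B / b) := by
      rw [hgap]
      positivity
    linarith

theorem stmt_5 (T : ℕ) (v d : ℕ → ℝ) (B lam ε : ℝ)
    (hv : ∀ t, v t ∈ Set.Icc (0 : ℝ) 1) (hd : ∀ t, 0 ≤ d t)
    (hB : 0 < B) (hBT : B ≤ T) (hlam : lam ∈ Set.Icc (0 : ℝ) 1)
    (hε0 : 0 ≤ ε) (hε1 : ε ≤ 1 - lam) :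
    Uhat T v d B (lam + ε) ≥ Uhat T v d B lam - T ^ 2 * ε / B - 2 := by
  have hb : lam + ε ∈ Set.Icc (0 : ℝ) 1 := ⟨by linarith [hlam.1], by linarith⟩
  have hab : lam ≤ lam + ε := by linarith
  suffices h : (auctionState v d B lam T).2 - T ^ 2 * (lam + ε - lam) / B - 2 ≤
      (auctionState v d B (lam + ε) T).2 by
    rwa [add_sub_cancel_left] at h
  by_cases huncapped : ∀ s < T, (lam + ε) * v s ≤ (auctionState v d B (lam + ε) s).1
  · have hcoupled := auctionState_snd_sub_le_of_bid_uncapped hv hd hab hb.2 T huncapped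
    have hεT : (lam + ε - lam) * T ≤ T ^ 2 * (lam + ε - lam) / B := by
      rw [le_div_iff₀ hB]
      nlinarith [mul_le_mul_of_nonneg_left hBT (mul_nonneg hε0 (Nat.cast_nonneg T))]
    linarith
  · push Not at huncapped
    obtain ⟨s, hsT, hcap⟩ := huncapped
    exact utility_gap_le_of_bid_capped hB hBT hlam.1 hab
      (lt_mul_of_bid_capped hv hd hb.1 hsT hcap)
      (auctionState_snd_le_mul_time hv hd hlam.2 T)
      (mul_auctionState_snd_le hv hd hB.le hlam T)
      (mul_auctionState_snd_ge_of_bid_capped hv hd hb hsT hcap)
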